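/- Let B be a set equipped with two binary operations a^{bar b} and a_{bar b}, and let S̄ : B×B → B×B be the barred switch map S̄(a,b) = (b_{bar a}, a^{bar b}). Then S̄ satisfies the set-theoretic Yang–Baxter equation (S̄×Id)∘(Id×S̄)∘(S̄×Id) = (Id×S̄)∘(S̄×Id)∘(Id×S̄) if and only if for all a, b, c in B the following three identities hold: (iv) (a^{bar b})^{bar c} = (a^{bar(c_{bar b})})^{bar(b^{bar c})}, (v) (c_{bar b})_{bar a} = (c_{bar(a^{bar b})})_{bar(b_{bar a})}, and (vi) (b_{bar a})^{bar(c_{bar(a^{bar b})})} = (b^{bar c})_{bar(a^{bar(c_{bar b})})}. -/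
import Mathlib


/-- `S × Id` acting on the first two coordinates of a triple. -/
def sTimesId {X : Type*} (S : X × X → X × X) : X × X × X → X × X × X :=
  fun p => ((S (p.1, p.2.1)).1, (S (p.1, p.2.1)).2, p.2.2)

/-- `Id × S` acting on the last two coordinates of a triple. -/
def idTimesS {X : Type*} (S : X × X → X × X) : X × X × X → X × X × X :=
  fun p => (p.1, S p.2)

theorem barred_switch_yang_baxter_iff (B : Type*) (upBar loBar : B → B → B)
    (Sbar : B × B → B × B) (hS : Sbar = fun p => (loBar p.2 p.1, upBar p.1 p.2)) :
    sTimesId Sbar ∘ idTimesS Sbar ∘ sTimesId Sbar =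
        idTimesS Sbar ∘ sTimesId Sbar ∘ idTimesS Sbar ↔
      (∀ a b c : B,
        upBar (upBar a b) c = upBar (upBar a (loBar c b)) (upBar b c) ∧
        loBar (loBar c b) a = loBar (loBar c (upBar a b)) (loBar b a) ∧
        upBar (loBar b a) (loBar c (upBar a b)) =
          loBar (upBar b c) (upBar a (loBar c b))) := by
  subst hS
  constructor
  · intro h a b c
    have := congrFun h (a, b, c)
    simp only [Function.comp_apply, sTimesId, idTimesS, Prod.mk.injEq] at this
    exact ⟨this.2.2, this.1.symm, this.2.1⟩
  · intro h
    funext p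
    obtain ⟨a, b, c⟩ := p
    obtain ⟨h1, h2, h3⟩ := h a b c
    simp only [Function.comp_apply, sTimesId, idTimesS, Prod.mk.injEq]
    exact ⟨h2.symm, h3, h1⟩
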